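/- arXiv:1512.06629 — 2 statements merged into one kernel-verified Lean document; each statement's English description precedes it below -/
import Mathlib

section
/- Let 1 < β < 2 and let f : [0,1] → ℝ be C^2. For a uniform grid x_j = jh with h = 1/N, let f_n denote the piecewise linear interpolant of f on the grid, and let M = sup_{[0,1]} |f''|. Then for each r with 1 ≤ r ≤ N-1, | ∫_0^{x_r} (x_r - s)^{-(β-1)} ( f(s) - f_n(s) ) ds | ≤ (h^{4-β} r^{2-β} / 8) · (1/(2-β)) · M; in particular, the product integration error for the weakly singular kernel (x_r - s)^{1-β} with piecewise linear interpolation is O(h^2) uniformly in r, bounded by h^2 M / (8(2-β)). -/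
/-- Piecewise linear interpolant of `f` on the uniform grid `x_j = j*h`. -/
noncomputable def piecewiseLinear (f : ℝ → ℝ) (h : ℝ) (s : ℝ) : ℝ :=
  f ((⌊s / h⌋ : ℝ) * h) +
    (s - (⌊s / h⌋ : ℝ) * h) / h * (f (((⌊s / h⌋ : ℝ) + 1) * h) - f ((⌊s / h⌋ : ℝ) * h))


section ProductIntegrationAux
open Set intervalIntegral

lemma linear_interp_error {f : ℝ → ℝ} (hf : ContDiffOn ℝ 2 f (Set.Icc 0 1))
    {M : ℝ} (hM : ∀ x ∈ Set.Icc (0:ℝ) 1, |deriv (deriv f) x| ≤ M)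
    {a b s : ℝ} (ha : 0 ≤ a) (hb : b ≤ 1) (has : a < s) (hsb : s < b) :
    |f s - (f a + (s - a) / (b - a) * (f b - f a))| ≤ M / 2 * ((s - a) * (b - s)) := by
  have hab : a < b := has.trans hsb
  have hba : b - a ≠ 0 := by linarith
  set L : ℝ → ℝ := fun t => f a + (t - a) / (b - a) * (f b - f a) with hL
  set w : ℝ → ℝ := fun t => (t - a) * (t - b) with hw
  have hws : w s ≠ 0 := by
    simp only [hw]
    exact mul_ne_zero (by linarith) (by linarith)
  set K : ℝ := (f s - L s) / w s with hK
  set g : ℝ → ℝ := fun t => f t - L t - K * w t with hg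
  have hIab : Set.Icc a b ⊆ Set.Icc (0:ℝ) 1 := Icc_subset_Icc ha hb
  have hcont : ContinuousOn g (Set.Icc a b) := by
    apply ContinuousOn.sub
    · apply ContinuousOn.sub (hf.continuousOn.mono hIab)
      fun_prop
    · fun_prop
  have hga : g a = 0 := by simp [hg, hL, hw]
  have hgb : g b = 0 := by
    simp only [hg, hL, hw, div_mul_eq_mul_div, mul_comm]
    field_simp
    ring
  have hgs : g s = 0 := by
    simp only [hg, hK]
    field_simp
    ring
  -- first Rolle applications
  obtain ⟨ζ₁, hζ₁, hdζ₁⟩ := exists_deriv_eq_zero has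
    (hcont.mono (Icc_subset_Icc le_rfl hsb.le)) (hga.trans hgs.symm)
  obtain ⟨ζ₂, hζ₂, hdζ₂⟩ := exists_deriv_eq_zero hsb
    (hcont.mono (Icc_subset_Icc has.le le_rfl)) (hgs.trans hgb.symm)
  -- derivative formula on (0,1)
  set φ : ℝ → ℝ := fun t => deriv f t - ((f b - f a) / (b - a) + K * (2 * t - a - b)) with hφ
  have hmem01 : ∀ t ∈ Set.Ioo (0:ℝ) 1, Set.Icc (0:ℝ) 1 ∈ nhds t := fun t ht =>
    Icc_mem_nhds ht.1 ht.2
  have hdiff : ∀ t ∈ Set.Ioo (0:ℝ) 1, DifferentiableAt ℝ f t := fun t ht =>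
    (hf.contDiffAt (hmem01 t ht)).differentiableAt (by norm_num)
  have hderiv : ∀ t ∈ Set.Ioo (0:ℝ) 1, deriv g t = φ t := by
    intro t ht
    have h1 : HasDerivAt f (deriv f t) t := (hdiff t ht).hasDerivAt
    have h2 : HasDerivAt L ((f b - f a) / (b - a)) t := by
      rw [hL]
      have h := ((((hasDerivAt_id' (x := t)).sub_const a).div_const (b - a)).mul_const
        (f b - f a)).const_add (f a)
      exact h.congr_deriv (by ring)
    have h3 : HasDerivAt w (2 * t - a - b) t := by
      rw [hw]
      have h := ((hasDerivAt_id' (x := t)).sub_const a).fun_mul ((hasDerivAt_id' (x := t)).sub_const b)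
      exact h.congr_deriv (by ring)
    have : HasDerivAt g (φ t) t := by
      have := (h1.fun_sub h2).fun_sub ((h3.const_mul K))
      exact this.congr_deriv (by simp only [hφ]; ring)
    exact this.deriv
  have hsub01 : Set.Ioo a b ⊆ Set.Ioo (0:ℝ) 1 := Ioo_subset_Ioo ha hb
  have hζsub : Set.Icc ζ₁ ζ₂ ⊆ Set.Ioo a b := fun t ht =>
    ⟨lt_of_lt_of_le hζ₁.1 ht.1, lt_of_le_of_lt ht.2 hζ₂.2⟩
  -- continuity of deriv f on (0,1)
  have hderivf_cont : ContinuousOn (deriv f) (Set.Ioo (0:ℝ) 1) := by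
    have h1 : ContinuousOn (derivWithin f (Set.Icc (0:ℝ) 1)) (Set.Icc (0:ℝ) 1) :=
      hf.continuousOn_derivWithin (uniqueDiffOn_Icc one_pos) (by norm_num)
    exact (h1.mono Ioo_subset_Icc_self).congr fun t ht =>
      (derivWithin_of_mem_nhds (hmem01 t ht)).symm
  have hφcont : ContinuousOn φ (Set.Ioo (0:ℝ) 1) := by
    apply hderivf_cont.sub
    fun_prop
  have hζ12 : ζ₁ < ζ₂ := hζ₁.2.trans hζ₂.1
  -- second Rolle
  obtain ⟨ξ, hξ, hdξ⟩ := exists_deriv_eq_zero hζ12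
    (((hφcont.mono (fun t ht => hsub01 (hζsub ht))).congr
      (fun t ht => hderiv t (hsub01 (hζsub ht)))))
    (hdζ₁.trans hdζ₂.symm)
  have hξ01 : ξ ∈ Set.Ioo (0:ℝ) 1 := hsub01 (hζsub ⟨hξ.1.le, hξ.2.le⟩)
  -- compute deriv (deriv g) ξ
  have hEq : deriv g =ᶠ[nhds ξ] φ := by
    filter_upwards [isOpen_Ioo.mem_nhds (hζsub ⟨hξ.1.le, hξ.2.le⟩)] with t ht
    exact hderiv t (hsub01 ht)
  have hEq2 : deriv f =ᶠ[nhds ξ] derivWithin f (Set.Icc (0:ℝ) 1) := by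
    filter_upwards [isOpen_Ioo.mem_nhds hξ01] with t ht
    exact (derivWithin_of_mem_nhds (hmem01 t ht)).symm
  have hdfd : DifferentiableAt ℝ (deriv f) ξ := by
    have h1 : ContDiffOn ℝ 1 (derivWithin f (Set.Icc (0:ℝ) 1)) (Set.Icc (0:ℝ) 1) :=
      hf.derivWithin (uniqueDiffOn_Icc one_pos) (by norm_num)
    have h2 : DifferentiableAt ℝ (derivWithin f (Set.Icc (0:ℝ) 1)) ξ :=
      (h1.contDiffAt (hmem01 ξ hξ01)).differentiableAt one_ne_zero
    exact (Filter.EventuallyEq.differentiableAt_iff hEq2).2 h2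
  have hKval : deriv (deriv f) ξ = 2 * K := by
    have h1 : deriv (deriv g) ξ = deriv φ ξ := Filter.EventuallyEq.deriv_eq hEq
    have h2 : deriv φ ξ = deriv (deriv f) ξ - 2 * K := by
      have hψ : HasDerivAt (fun t => (f b - f a) / (b - a) + K * (2 * t - a - b)) (2 * K) ξ := by
        have : HasDerivAt (fun t : ℝ => 2 * t - a - b) 2 ξ := by
          simpa using (((hasDerivAt_id ξ).const_mul 2).sub_const a).sub_const b
        simpa [mul_comm] using (this.const_mul K).const_add ((f b - f a) / (b - a))
      rw [hφ]
      rw [deriv_fun_sub hdfd hψ.differentiableAt, hψ.deriv]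
    rw [h1, h2] at hdξ
    linarith
  have hKbound : |K| ≤ M / 2 := by
    have := hM ξ ⟨hξ01.1.le, hξ01.2.le⟩
    rw [hKval] at this
    rw [abs_mul] at this
    simp only [abs_two] at this
    linarith [abs_nonneg K]
  have hfsL : f s - L s = K * w s := by
    rw [hK]; field_simp
  rw [show f s - (f a + (s - a) / (b - a) * (f b - f a)) = K * w s from hfsL]
  rw [abs_mul]
  have hwabs : |w s| = (s - a) * (b - s) := by
    rw [hw]
    simp only
    rw [abs_mul, abs_of_pos (by linarith : (0:ℝ) < s - a), abs_of_neg (by linarith : s - b < 0)]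
    ring
  rw [hwabs]
  apply mul_le_mul_of_nonneg_right hKbound
  exact mul_nonneg (by linarith) (by linarith)

lemma pointwise_err {f : ℝ → ℝ} (hf : ContDiffOn ℝ 2 f (Set.Icc 0 1))
    {M : ℝ} (hM : ∀ x ∈ Set.Icc (0:ℝ) 1, |deriv (deriv f) x| ≤ M)
    {h : ℝ} (hpos : 0 < h) (r : ℕ) (hc : (r:ℝ) * h ≤ 1)
    {s : ℝ} (hs0 : 0 < s) (hsc : s ≤ (r:ℝ) * h) :
    |f s - piecewiseLinear f h s| ≤ h ^ 2 * M / 8 := by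
  have hM0 : 0 ≤ M := le_trans (abs_nonneg _) (hM 0 (by simp))
  set j : ℤ := ⌊s / h⌋ with hj
  set a : ℝ := (j : ℝ) * h with hA
  have hja : (j : ℝ) ≤ s / h := Int.floor_le _
  have hjb : s / h < (j : ℝ) + 1 := Int.lt_floor_add_one _
  have hsh : (s / h) * h = s := by field_simp
  have has : a ≤ s := by
    rw [hA]
    calc (j : ℝ) * h ≤ (s / h) * h := by nlinarith
    _ = s := hsh
  have hsb : s < ((j : ℝ) + 1) * h := by
    calc s = (s / h) * h := hsh.symm
    _ < ((j : ℝ) + 1) * h := by nlinarith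
  rcases eq_or_lt_of_le has with heq | hlt
  · have hpl : piecewiseLinear f h s = f s := by
      unfold piecewiseLinear
      rw [← hj, ← hA, heq]
      simp
    rw [hpl]
    simp
    positivity
  · have hj0 : (0 : ℝ) ≤ (j : ℝ) := by
      have : (0:ℤ) ≤ j := Int.floor_nonneg.mpr (by positivity)
      exact_mod_cast this
    have hjr : (j : ℝ) + 1 ≤ (r : ℝ) := by
      have h1 : (j : ℝ) < (r : ℝ) := by
        have : (j : ℝ) * h < (r : ℝ) * h := lt_of_lt_of_le hlt hsc
        nlinarith
      have h2 : j < (r : ℤ) := by exact_mod_cast h1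
      have h3 : j + 1 ≤ (r : ℤ) := h2
      exact_mod_cast h3
    have hb1 : ((j : ℝ) + 1) * h ≤ 1 :=
      le_trans (by nlinarith) hc
    have key := linear_interp_error hf hM (a := a) (b := ((j : ℝ) + 1) * h) (s := s)
      (mul_nonneg hj0 hpos.le) hb1 hlt hsb
    have hba : ((j : ℝ) + 1) * h - a = h := by rw [hA]; ring
    rw [hba] at key
    have hpl : piecewiseLinear f h s = f a + (s - a) / h * (f (((j:ℝ)+1) * h) - f a) := by
      unfold piecewiseLinear
      rw [← hj, ← hA]
    rw [hpl]
    calc |f s - (f a + (s - a) / h * (f (((j:ℝ)+1) * h) - f a))|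
        ≤ M / 2 * ((s - a) * (((j:ℝ)+1) * h - s)) := key
    _ ≤ M / 2 * (h ^ 2 / 4) := by
        have hxy : (s - a) * (((j:ℝ)+1) * h - s) ≤ h ^ 2 / 4 := by
          nlinarith [sq_nonneg ((s - a) - (((j:ℝ)+1) * h - s)), hba]
        exact mul_le_mul_of_nonneg_left hxy (by linarith)
    _ = h ^ 2 * M / 8 := by ring

theorem product_integration_error (β : ℝ) (hβ1 : 1 < β) (hβ2 : β < 2)
    (N : ℕ) (hN : 1 ≤ N) (h : ℝ) (hh : h = 1 / (N : ℝ))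
    (f : ℝ → ℝ) (hf : ContDiffOn ℝ 2 f (Set.Icc 0 1))
    (M : ℝ) (hM : ∀ x ∈ Set.Icc (0 : ℝ) 1, |deriv (deriv f) x| ≤ M)
    (r : ℕ) (hr1 : 1 ≤ r) (hr2 : r ≤ N - 1) :
    |∫ s in (0 : ℝ)..((r : ℝ) * h),
        ((r : ℝ) * h - s) ^ (-(β - 1)) * (f s - piecewiseLinear f h s)|
      ≤ h ^ (4 - β) * (r : ℝ) ^ (2 - β) / 8 * (1 / (2 - β)) * M ∧
    |∫ s in (0 : ℝ)..((r : ℝ) * h),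
        ((r : ℝ) * h - s) ^ (-(β - 1)) * (f s - piecewiseLinear f h s)|
      ≤ h ^ 2 * M / (8 * (2 - β)) := by
  have hN0 : (0:ℝ) < (N:ℝ) := by exact_mod_cast Nat.pos_of_ne_zero (by omega)
  have hpos : 0 < h := by rw [hh]; positivity
  have hr0 : (0:ℝ) < (r:ℝ) := by exact_mod_cast hr1
  set c : ℝ := (r:ℝ) * h with hc
  have hcpos : 0 < c := by positivity
  have hc1 : c ≤ 1 := by
    have h1 : (r:ℝ) ≤ (N:ℝ) := by exact_mod_cast (by omega : r ≤ N)
    rw [hc, hh]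
    rw [mul_one_div, div_le_one hN0]
    exact h1
  have hβ0 : (0:ℝ) < 2 - β := by linarith
  have hM0 : 0 ≤ M := le_trans (abs_nonneg _) (hM 0 (by simp))
  set p : ℝ := -(β - 1) with hp
  have hp1 : (-1:ℝ) < p := by rw [hp]; linarith
  have hp1' : p + 1 = 2 - β := by rw [hp]; ring
  have hker : IntervalIntegrable (fun s : ℝ => (c - s) ^ p) MeasureTheory.volume 0 c := by
    have := (intervalIntegral.intervalIntegrable_rpow' (a := 0) (b := c) hp1).comp_sub_left c
    simpa using this.symm
  have hbint : IntervalIntegrable (fun s : ℝ => h ^ 2 * M / 8 * (c - s) ^ p)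
      MeasureTheory.volume 0 c := hker.const_mul _
  have key : |∫ s in (0:ℝ)..c, (c - s) ^ p * (f s - piecewiseLinear f h s)|
      ≤ |∫ s in (0:ℝ)..c, h ^ 2 * M / 8 * (c - s) ^ p| := by
    have hle : ∀ᵐ t ∂MeasureTheory.volume.restrict (Set.uIoc (0:ℝ) c),
        ‖(c - t) ^ p * (f t - piecewiseLinear f h t)‖ ≤ h ^ 2 * M / 8 * (c - t) ^ p := by
      rw [uIoc_of_le hcpos.le]
      filter_upwards [MeasureTheory.ae_restrict_mem measurableSet_Ioc] with t ht
      have h1 : 0 ≤ (c - t) ^ p := Real.rpow_nonneg (by linarith [ht.2]) _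
      have h2 := pointwise_err hf hM hpos r hc1 ht.1 ht.2
      rw [Real.norm_eq_abs, abs_mul, abs_of_nonneg h1]
      calc (c - t) ^ p * |f t - piecewiseLinear f h t|
          ≤ (c - t) ^ p * (h ^ 2 * M / 8) := mul_le_mul_of_nonneg_left h2 h1
      _ = h ^ 2 * M / 8 * (c - t) ^ p := by ring
    simpa [Real.norm_eq_abs] using
      intervalIntegral.norm_integral_le_abs_of_norm_le hle hbint
  have hint : (∫ s in (0:ℝ)..c, (c - s) ^ p) = c ^ (2 - β) / (2 - β) := by
    rw [intervalIntegral.integral_comp_sub_left (fun x : ℝ => x ^ p) c]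
    rw [sub_zero, sub_self]
    rw [integral_rpow (Or.inl hp1)]
    rw [Real.zero_rpow (by rw [hp1']; linarith), hp1']
    ring
  have hbval : |∫ s in (0:ℝ)..c, h ^ 2 * M / 8 * (c - s) ^ p|
      = h ^ 2 * M / 8 * (c ^ (2 - β) / (2 - β)) := by
    rw [intervalIntegral.integral_const_mul, hint]
    rw [abs_of_nonneg (by positivity)]
  have keyval : |∫ s in (0:ℝ)..c, (c - s) ^ p * (f s - piecewiseLinear f h s)|
      ≤ h ^ 2 * M / 8 * (c ^ (2 - β) / (2 - β)) := key.trans_eq hbval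
  have hB1 : h ^ (4 - β) * (r:ℝ) ^ (2 - β) / 8 * (1 / (2 - β)) * M
      = h ^ 2 * M / 8 * (c ^ (2 - β) / (2 - β)) := by
    rw [hc, Real.mul_rpow hr0.le hpos.le]
    rw [show h ^ (4 - β) = h ^ (2:ℕ) * h ^ (2 - β) by
      rw [← Real.rpow_natCast h 2, ← Real.rpow_add hpos]; congr 1; push_cast; ring]
    ring
  constructor
  · rw [hB1]; exact keyval
  · refine keyval.trans ?_
    have hcle : c ^ (2 - β) ≤ 1 := Real.rpow_le_one hcpos.le hc1 hβ0.le
    calc h ^ 2 * M / 8 * (c ^ (2 - β) / (2 - β)) ≤ h ^ 2 * M / 8 * (1 / (2 - β)) := by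
          gcongr
    _ = h ^ 2 * M / (8 * (2 - β)) := by rw [div_mul_div_comm, mul_one]

end ProductIntegrationAux
end

section
/- If f is bounded on [0,1] and twice differentiable at a point x ∈ (0,1) with f''(x) ≠ 0, then the Bernstein approximation polynomials p_n(x) = Σ_{k=0}^{n} f(k/n) B_{k,n}(x) satisfy the Voronovskaya asymptotic: lim_{n→∞} n ( f(x) - p_n(x) ) = - x(1-x) f''(x) / 2. -/
open Filter Finset Polynomial Topology Asymptotics Metric

/-!
Write `f y = f x + f' x (y - x) + f'' x / 2 (y - x)² + g y` with `g y = o((y - x)²)` (Peano).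
Bernstein averaging reproduces constants, kills the first central moment and turns the second
into `x (1 - x) / n`, so `n (p_n x - f x) = x (1 - x) f'' x / 2 + n Σ g (k/n) B_{n,k} x`.
For the remainder, `|g y| ≤ ε (y - x)² + (M / δ⁴) (y - x)⁴` on `[0, 1]`, and the fourth central
moment is `O(1/n²)`, so `n Σ g (k/n) B_{n,k} x` is eventually at most `ε/4 + O(1/n)`.
All central moments come from the factorial moments `Σ k^(j) B_{n,k} x = n^(j) x^j`.
-/

theorem isLittleO_taylor_two_of_differentiableAt_deriv {f : ℝ → ℝ} {x : ℝ}
    (hf : ∀ᶠ y in 𝓝 x, DifferentiableAt ℝ f y) (hf' : DifferentiableAt ℝ (deriv f) x) :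
    (fun y => f y - f x - deriv f x * (y - x) - deriv (deriv f) x / 2 * (y - x) ^ 2)
      =o[𝓝 x] fun y => (y - x) ^ 2 := by
  obtain ⟨r, hr, hdiff⟩ := eventually_nhds_iff_ball.1 hf
  have hball : 𝓝[ball x r] x = 𝓝 x := nhdsWithin_eq_nhds.2 (ball_mem_nhds x hr)
  set a := deriv f x
  set b := deriv (deriv f) x
  have hderiv : ∀ y ∈ ball x r,
      HasDerivWithinAt (fun y => f y - a * (y - x) - b / 2 * (y - x) ^ 2)
        (deriv f y - a - b * (y - x)) (ball x r) y := by
    intro y hy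
    have hlin := ((hasDerivAt_id y).sub_const x).const_mul a
    have hquad := (((hasDerivAt_id y).sub_const x).pow 2).const_mul (b / 2)
    refine (((hdiff y hy).hasDerivAt.sub hlin).sub hquad).hasDerivWithinAt.congr_deriv ?_
    simp only [id, mul_one, Nat.cast_ofNat]
    ring
  have hsmall : (fun y => deriv f y - a - b * (y - x)) =o[𝓝[ball x r] x] fun y => (y - x) ^ 1 := by
    simpa [hball, smul_eq_mul, mul_comm] using hasDerivAt_iff_isLittleO.1 hf'.hasDerivAt
  have := (convex_ball x r).isLittleO_pow_succ_real (mem_ball_self hr) hderiv hsmall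
  rw [hball] at this
  exact this.congr_left fun y => by ring

lemma Nat.cast_descFactorial_succ {R : Type*} [CommRing R] (k j : ℕ) :
    (k.descFactorial (j + 1) : R) = ((k : R) - j) * k.descFactorial j := by
  simp only [← descPochhammer_eval_eq_descFactorial, descPochhammer_succ_right, eval_mul, eval_sub,
    eval_X, eval_natCast, mul_comm]

lemma Nat.add_descFactorial_mul_choose (j m i : ℕ) :
    (j + i).descFactorial j * (j + m).choose (j + i) = (j + m).descFactorial j * m.choose i := by
  have hchoose := Nat.choose_mul (n := j + m) (Nat.le_add_right j i)
  simp only [Nat.add_sub_cancel_left] at hchoose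
  rw [Nat.descFactorial_eq_factorial_mul_choose, Nat.descFactorial_eq_factorial_mul_choose,
    mul_assoc, mul_comm (Nat.choose _ _), hchoose, mul_assoc]

namespace bernsteinPolynomial

section CommRing

variable {R : Type*} [CommRing R]

lemma eval_eq (n k : ℕ) (x : R) :
    (bernsteinPolynomial R n k).eval x = n.choose k * x ^ k * (1 - x) ^ (n - k) := by
  simp [bernsteinPolynomial]

lemma sum_eval (n : ℕ) (x : R) :
    ∑ k ∈ range (n + 1), (bernsteinPolynomial R n k).eval x = 1 := by
  rw [← eval_finsetSum, bernsteinPolynomial.sum, eval_one]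

lemma sum_descFactorial_mul_eval (n j : ℕ) (x : R) :
    ∑ k ∈ range (n + 1), (k.descFactorial j : R) * (bernsteinPolynomial R n k).eval x
      = n.descFactorial j * x ^ j := by
  rcases lt_or_ge n j with hnj | hjn
  · rw [Nat.descFactorial_eq_zero_iff_lt.2 hnj, Nat.cast_zero, zero_mul]
    refine sum_eq_zero fun k hk => ?_
    rw [Nat.descFactorial_eq_zero_iff_lt.2 (by grind), Nat.cast_zero, zero_mul]
  obtain ⟨m, rfl⟩ := Nat.exists_eq_add_of_le hjn
  -- the terms with `k < j` vanish; the others are reindexed as `k = j + i`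
  rw [show j + m + 1 = j + (m + 1) by ring, sum_range_add,
    sum_eq_zero fun k hk => by rw [Nat.descFactorial_eq_zero_iff_lt.2 (mem_range.1 hk),
      Nat.cast_zero, zero_mul], zero_add]
  have hterm : ∀ i ∈ range (m + 1), ((j + i).descFactorial j : R) *
      (bernsteinPolynomial R (j + m) (j + i)).eval x
        = (j + m).descFactorial j * x ^ j * (bernsteinPolynomial R m i).eval x := by
    intro i _
    have hcast := congrArg (Nat.cast (R := R)) (Nat.add_descFactorial_mul_choose j m i)
    push_cast at hcast
    rw [eval_eq, eval_eq, Nat.add_sub_add_left, pow_add]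
    linear_combination x ^ j * x ^ i * (1 - x) ^ (m - i) * hcast
  rw [sum_congr rfl hterm, ← mul_sum, sum_eval, mul_one]

lemma sum_sub_mul_eval (n : ℕ) (x : R) :
    ∑ k ∈ range (n + 1), ((k : R) - n * x) * (bernsteinPolynomial R n k).eval x = 0 := by
  have hk : ∀ k : ℕ,
      (k : R) - n * x = (k.descFactorial 1 : R) - n * x * (k.descFactorial 0 : R) := by
    simp
  simp only [hk, sub_mul, sum_sub_distrib, mul_assoc, ← mul_sum, sum_descFactorial_mul_eval]
  simp

lemma sum_sub_sq_mul_eval (n : ℕ) (x : R) :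
    ∑ k ∈ range (n + 1), ((k : R) - n * x) ^ 2 * (bernsteinPolynomial R n k).eval x
      = n * x * (1 - x) := by
  have hk : ∀ k : ℕ, ((k : R) - n * x) ^ 2 = (k.descFactorial 2 : R)
      + (1 - 2 * n * x) * (k.descFactorial 1 : R) + (n * x) ^ 2 * (k.descFactorial 0 : R) := by
    intro k
    simp only [Nat.cast_descFactorial_succ, Nat.descFactorial_zero]
    push_cast
    ring
  simp only [hk, add_mul, sum_add_distrib, mul_assoc, ← mul_sum, sum_descFactorial_mul_eval]
  simp only [Nat.cast_descFactorial_succ, Nat.descFactorial_zero]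
  push_cast
  ring

lemma sum_sub_pow_four_mul_eval (n : ℕ) (x : R) :
    ∑ k ∈ range (n + 1), ((k : R) - n * x) ^ 4 * (bernsteinPolynomial R n k).eval x
      = n * x * (1 - x) * (1 + 3 * (n - 2) * x * (1 - x)) := by
  have hk : ∀ k : ℕ, ((k : R) - n * x) ^ 4 = (k.descFactorial 4 : R)
      + (6 - 4 * n * x) * (k.descFactorial 3 : R)
      + (7 - 12 * n * x + 6 * (n * x) ^ 2) * (k.descFactorial 2 : R)
      + (1 - 4 * n * x + 6 * (n * x) ^ 2 - 4 * (n * x) ^ 3) * (k.descFactorial 1 : R)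
      + (n * x) ^ 4 * (k.descFactorial 0 : R) := by
    intro k
    simp only [Nat.cast_descFactorial_succ, Nat.descFactorial_zero]
    push_cast
    ring
  simp only [hk, add_mul, sum_add_distrib, mul_assoc, ← mul_sum, sum_descFactorial_mul_eval]
  simp only [Nat.cast_descFactorial_succ, Nat.descFactorial_zero]
  push_cast
  ring

end CommRing

section Field

variable {K : Type*} [Field K] {n : ℕ}

lemma sum_div_sub_pow_mul_eval (hn : (n : K) ≠ 0) (j : ℕ) (x : K) :
    ∑ k ∈ range (n + 1), ((k : K) / n - x) ^ j * (bernsteinPolynomial K n k).eval x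
      = (∑ k ∈ range (n + 1), ((k : K) - n * x) ^ j * (bernsteinPolynomial K n k).eval x)
          / n ^ j := by
  rw [sum_div]
  refine sum_congr rfl fun k _ => ?_
  rw [div_sub' hn, div_pow]
  ring

lemma sum_mul_eval_eq_add_sum_remainder (hn : (n : K) ≠ 0) (f : K → K) (x a c : K) :
    ∑ k ∈ range (n + 1), f (k / n) * (bernsteinPolynomial K n k).eval x
      = f x + c * (x * (1 - x) / n) + ∑ k ∈ range (n + 1),
        (f (k / n) - f x - a * (k / n - x) - c * (k / n - x) ^ 2)
          * (bernsteinPolynomial K n k).eval x := by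
  have h1 := sum_div_sub_pow_mul_eval hn 1 x
  have h2 := sum_div_sub_pow_mul_eval hn 2 x
  simp only [pow_one, sum_sub_mul_eval, zero_div] at h1
  rw [sum_sub_sq_mul_eval] at h2
  have hsplit : ∑ k ∈ range (n + 1),
      (f (k / n) - f x - a * (k / n - x) - c * (k / n - x) ^ 2) * (bernsteinPolynomial K n k).eval x
        = ∑ k ∈ range (n + 1), f (k / n) * (bernsteinPolynomial K n k).eval x
        - f x * ∑ k ∈ range (n + 1), (bernsteinPolynomial K n k).eval x
        - a * ∑ k ∈ range (n + 1), ((k : K) / n - x) * (bernsteinPolynomial K n k).eval x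
        - c * ∑ k ∈ range (n + 1), ((k : K) / n - x) ^ 2 * (bernsteinPolynomial K n k).eval x := by
    simp only [mul_sum, ← sum_sub_distrib]
    exact sum_congr rfl fun k _ => by ring
  rw [hsplit, sum_eval, h1, h2]
  field_simp
  ring

end Field

section Real

lemma eval_nonneg {n k : ℕ} {x : ℝ} (hx : x ∈ Set.Icc 0 1) :
    0 ≤ (bernsteinPolynomial ℝ n k).eval x := by
  have := sub_nonneg.2 hx.2
  have := hx.1
  rw [eval_eq]
  positivity

lemma sum_sub_pow_four_mul_eval_le (n : ℕ) {x : ℝ} (hx : x ∈ Set.Icc 0 1) :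
    ∑ k ∈ range (n + 1), ((k : ℝ) - n * x) ^ 4 * (bernsteinPolynomial ℝ n k).eval x ≤ n ^ 2 := by
  rw [sum_sub_pow_four_mul_eval]
  have hu₀ : 0 ≤ x * (1 - x) := mul_nonneg hx.1 (sub_nonneg.2 hx.2)
  have hu₁ : x * (1 - x) ≤ 1 / 4 := by nlinarith [sq_nonneg (x - 1 / 2)]
  have hn : (n : ℝ) ≤ n ^ 2 := by
    rcases n with _ | n
    · simp
    · push_cast; nlinarith
  have hn₀ : (0 : ℝ) ≤ n := Nat.cast_nonneg n
  calc (n : ℝ) * x * (1 - x) * (1 + 3 * (n - 2) * x * (1 - x))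
      = n * (x * (1 - x)) + 3 * n ^ 2 * (x * (1 - x)) ^ 2 - 6 * n * (x * (1 - x)) ^ 2 := by ring
    _ ≤ n * (1 / 4) + 3 * n ^ 2 * (1 / 4) ^ 2 - 0 := by gcongr; positivity
    _ ≤ n ^ 2 := by nlinarith

lemma abs_nat_mul_sum_mul_eval_le {g : ℝ → ℝ} {x c T : ℝ} (hx : x ∈ Set.Icc 0 1) (hT : 0 ≤ T)
    (hg : ∀ y ∈ Set.Icc 0 1, |g y| ≤ c * (y - x) ^ 2 + T * (y - x) ^ 4) {n : ℕ} (hn : n ≠ 0) :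
    |n * ∑ k ∈ range (n + 1), g (k / n) * (bernsteinPolynomial ℝ n k).eval x|
      ≤ c * (x * (1 - x)) + T / n := by
  have hn' : (n : ℝ) ≠ 0 := Nat.cast_ne_zero.2 hn
  have hnode : ∀ k ∈ range (n + 1), (k / n : ℝ) ∈ Set.Icc 0 1 := fun k hk =>
    ⟨by positivity,
      div_le_one_of_le₀ (by exact_mod_cast mem_range_succ_iff.1 hk) (Nat.cast_nonneg n)⟩
  calc |n * ∑ k ∈ range (n + 1), g (k / n) * (bernsteinPolynomial ℝ n k).eval x|
      ≤ n * ∑ k ∈ range (n + 1), (c * ((k : ℝ) / n - x) ^ 2 + T * ((k : ℝ) / n - x) ^ 4)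
          * (bernsteinPolynomial ℝ n k).eval x := by
        rw [abs_mul, Nat.abs_cast]
        gcongr
        refine (abs_sum_le_sum_abs _ _).trans (sum_le_sum fun k hk => ?_)
        rw [abs_mul, abs_of_nonneg (eval_nonneg hx)]
        exact mul_le_mul_of_nonneg_right (hg _ (hnode k hk)) (eval_nonneg hx)
    _ = n * (c * ∑ k ∈ range (n + 1), ((k : ℝ) / n - x) ^ 2 * (bernsteinPolynomial ℝ n k).eval x
        + T * ∑ k ∈ range (n + 1), ((k : ℝ) / n - x) ^ 4 * (bernsteinPolynomial ℝ n k).eval x) := by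
        simp only [add_mul, sum_add_distrib, mul_sum, mul_assoc]
    _ ≤ n * (c * (n * x * (1 - x) / n ^ 2) + T * (n ^ 2 / n ^ 4)) := by
        rw [sum_div_sub_pow_mul_eval hn', sum_div_sub_pow_mul_eval hn', sum_sub_sq_mul_eval]
        gcongr
        exact sum_sub_pow_four_mul_eval_le n hx
    _ = c * (x * (1 - x)) + T / n := by
        field_simp

theorem tendsto_nat_mul_sum_mul_eval_of_isLittleO {g : ℝ → ℝ} {x M : ℝ} (hx : x ∈ Set.Icc 0 1)
    (hM : ∀ y ∈ Set.Icc 0 1, |g y| ≤ M) (hg : g =o[𝓝 x] fun y => (y - x) ^ 2) :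
    Tendsto (fun n : ℕ => n * ∑ k ∈ range (n + 1), g (k / n) * (bernsteinPolynomial ℝ n k).eval x)
      atTop (𝓝 0) := by
  rw [Metric.tendsto_nhds]
  intro ε hε
  obtain ⟨δ, hδ, hnear⟩ := Metric.eventually_nhds_iff.1 (hg.def (half_pos hε))
  set T := M / δ ^ 4
  have hT : 0 ≤ T := div_nonneg ((abs_nonneg _).trans (hM x hx)) (by positivity)
  -- away from `x`, the bound `M` is dominated by `M (y - x)⁴ / δ⁴`
  have hpt : ∀ y ∈ Set.Icc 0 1, |g y| ≤ ε / 2 * (y - x) ^ 2 + T * (y - x) ^ 4 := by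
    intro y hy
    rcases lt_or_ge |y - x| δ with hyx | hyx
    · have := hnear (y := y) (by rwa [Real.dist_eq])
      rw [Real.norm_eq_abs, Real.norm_eq_abs, abs_of_nonneg (sq_nonneg (y - x))] at this
      have : 0 ≤ T * (y - x) ^ 4 := by positivity
      linarith
    · have hδ4 : δ ^ 4 ≤ (y - x) ^ 4 := by
        simpa only [pow_abs, abs_pow, Even.pow_abs ⟨2, rfl⟩] using pow_le_pow_left₀ hδ.le hyx 4
      have : M ≤ T * (y - x) ^ 4 := by
        rw [div_mul_eq_mul_div, le_div_iff₀ (by positivity)]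
        exact mul_le_mul_of_nonneg_left hδ4 ((abs_nonneg _).trans (hM x hx))
      have : 0 ≤ ε / 2 * (y - x) ^ 2 := by positivity
      linarith [hM y hy]
  have hxx : x * (1 - x) ≤ 1 / 4 := by nlinarith [sq_nonneg (x - 1 / 2)]
  filter_upwards [(tendsto_const_div_atTop_nhds_zero_nat T).eventually (gt_mem_nhds (half_pos hε)),
    eventually_ne_atTop 0] with n hTn hn
  rw [Real.dist_eq, sub_zero]
  calc _ ≤ ε / 2 * (x * (1 - x)) + T / n := abs_nat_mul_sum_mul_eval_le hx hT hpt hn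
    _ < ε := by nlinarith

end Real

end bernsteinPolynomial

lemma abs_sub_sub_mul_sub_mul_sq_le {u v a c t : ℝ} (ht : |t| ≤ 1) :
    |u - v - a * t - c * t ^ 2| ≤ |u| + |v| + |a| + |c| := by
  have hat : |a * t| ≤ |a| := by
    rw [abs_mul]
    exact mul_le_of_le_one_right (abs_nonneg a) ht
  have hct : |c * t ^ 2| ≤ |c| := by
    rw [abs_mul, abs_pow]
    exact mul_le_of_le_one_right (abs_nonneg c) (pow_le_one₀ (abs_nonneg t) ht)
  have := abs_sub (u - v - a * t) (c * t ^ 2)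
  have := abs_sub (u - v) (a * t)
  have := abs_sub u v
  linarith

theorem voronovskaya_general (f : ℝ → ℝ) (x : ℝ) (hx0 : 0 < x) (hx1 : x < 1)
    (C : ℝ) (hbdd : ∀ y ∈ Set.Icc (0 : ℝ) 1, |f y| ≤ C)
    (hdiff : ∀ᶠ y in nhds x, DifferentiableAt ℝ f y)
    (hdiff2 : DifferentiableAt ℝ (deriv f) x) :
    Tendsto (fun n : ℕ =>
        (n : ℝ) * (f x - ∑ k ∈ Finset.range (n + 1),
          f ((k : ℝ) / (n : ℝ)) * (n.choose k : ℝ) * x ^ k * (1 - x) ^ (n - k)))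
      atTop (nhds (-(x * (1 - x) * deriv (deriv f) x / 2))) := by
  set a := deriv f x
  set b := deriv (deriv f) x
  have hx : x ∈ Set.Icc (0 : ℝ) 1 := ⟨hx0.le, hx1.le⟩
  have hbound : ∀ y ∈ Set.Icc (0 : ℝ) 1,
      |f y - f x - a * (y - x) - b / 2 * (y - x) ^ 2| ≤ 2 * C + |a| + |b / 2| := fun y hy =>
    (abs_sub_sub_mul_sub_mul_sq_le (abs_sub_le_of_nonneg_of_le hy.1 hy.2 hx.1 hx.2)).trans
      (by linarith [hbdd y hy, hbdd x hx])
  have hrem := bernsteinPolynomial.tendsto_nat_mul_sum_mul_eval_of_isLittleO hx hbound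
    (isLittleO_taylor_two_of_differentiableAt_deriv hdiff hdiff2)
  have hlim := (tendsto_const_nhds (x := -(x * (1 - x) * b / 2))).sub hrem
  rw [sub_zero] at hlim
  refine hlim.congr' ?_
  filter_upwards [eventually_ne_atTop 0] with n hn
  have hsum : ∑ k ∈ range (n + 1), f (k / n) * (n.choose k : ℝ) * x ^ k * (1 - x) ^ (n - k)
      = ∑ k ∈ range (n + 1), f (k / n) * (bernsteinPolynomial ℝ n k).eval x :=
    sum_congr rfl fun k _ => by rw [bernsteinPolynomial.eval_eq]; ring
  rw [hsum, bernsteinPolynomial.sum_mul_eval_eq_add_sum_remainder (Nat.cast_ne_zero.2 hn)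
    f x a (b / 2)]
  field_simp
  ring

theorem voronovskaya (f : ℝ → ℝ) (x : ℝ) (hx0 : 0 < x) (hx1 : x < 1)
    (C : ℝ) (hbdd : ∀ y ∈ Set.Icc (0 : ℝ) 1, |f y| ≤ C)
    (hdiff : ∀ᶠ y in nhds x, DifferentiableAt ℝ f y)
    (hdiff2 : DifferentiableAt ℝ (deriv f) x)
    (hne : deriv (deriv f) x ≠ 0) :
    Tendsto (fun n : ℕ =>
        (n : ℝ) * (f x - ∑ k ∈ Finset.range (n + 1),
          f ((k : ℝ) / (n : ℝ)) * (n.choose k : ℝ) * x ^ k * (1 - x) ^ (n - k)))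
      atTop (nhds (-(x * (1 - x) * deriv (deriv f) x / 2))) :=
  voronovskaya_general f x hx0 hx1 C hbdd hdiff hdiff2
end
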